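/- Let ψ : 𝔻² → 𝔻 be holomorphic and extend to a C² map on the closed bidisc, with ψ(1,1) = 1 and (∂ψ/∂z2)(1,1) = 0. Then ψ(1, z2) = 1 for every z2 in the closed unit disc (i.e. the boundary slice z2 ↦ ψ(1, z2) is identically 1). -/

import Mathlib

/-!
The slice `g w = ψ (1, w)` is holomorphic on the open disc, even though `1` lies on the
boundary: the Cauchy–Riemann equations hold on the closed bidisc by continuity of the real
derivative. It maps the disc into the closed disc, and since `ψ` is `C²` with
`∂ψ/∂z₂ (1, 1) = 0`, it satisfies `‖g r - 1‖ = O((1 - r)²)` as `r → 1⁻`.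
If `‖g‖ < 1` on the open disc, Schwarz's lemma applied to a Möbius transform of `g` gives
Julia's inequality `(1 - ‖g 0‖)² (1 - r²) ≤ 1 - ‖g r‖²`, so `1 - ‖g r‖` is at least of
order `1 - r`, a contradiction. Hence `‖g‖` attains `1` inside the disc, and by the maximum
modulus principle `g` is constant, equal to `g 1 = 1`.
-/

open MeasureTheory Complex Set

noncomputable section

/-- The open unit bidisc in ℂ². -/
def bidisk : Set (ℂ × ℂ) := {z | ‖z.1‖ < 1 ∧ ‖z.2‖ < 1}

/-- The weight (1-|z₁|²)^β (1-|z₂|²)^β. -/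
def wWeight (β : ℝ) (z : ℂ × ℂ) : ℝ :=
  (1 - ‖z.1‖ ^ 2) ^ β * (1 - ‖z.2‖ ^ 2) ^ β

/-- Weighted volume V_β of a set E ⊆ 𝔻². -/
def wVol (β : ℝ) (E : Set (ℂ × ℂ)) : ℝ := ∫ z in E, wWeight β z

/-- Boundedness of the composition operator C_Φ on A²_β(𝔻²). -/
def CompBounded (β : ℝ) (Φ : ℂ × ℂ → ℂ × ℂ) : Prop :=
  ∃ C : ℝ, 0 < C ∧ ∀ f : ℂ × ℂ → ℂ, DifferentiableOn ℂ f bidisk →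
    (∫ z in bidisk, ‖f (Φ z)‖ ^ 2 * wWeight β z) ≤
      C * ∫ z in bidisk, ‖f z‖ ^ 2 * wWeight β z

/-- Evaluation of a two-variable polynomial at a point of ℂ². -/
def pev (P : MvPolynomial (Fin 2) ℂ) (z : ℂ × ℂ) : ℂ := MvPolynomial.eval ![z.1, z.2] P

/-- `Pt` is the reflection p̃(z₁,z₂) = z₁ⁿ z₂ᵐ conj(p(1/z̄₁, 1/z̄₂)) of `P`,
where (n,m) is the bidegree of `P`. -/
def IsReflection (P Pt : MvPolynomial (Fin 2) ℂ) : Prop :=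
  ∀ z : ℂ × ℂ, z.1 ≠ 0 → z.2 ≠ 0 →
    pev Pt z = z.1 ^ (MvPolynomial.degreeOf 0 P) * z.2 ^ (MvPolynomial.degreeOf 1 P) *
      (starRingEnd ℂ) (pev P (1 / (starRingEnd ℂ) z.1, 1 / (starRingEnd ℂ) z.2))

/-- `P` has no zeros in the closed bidisc outside the bitorus 𝕋². -/
def StableOnBidisk (P : MvPolynomial (Fin 2) ℂ) : Prop :=
  ∀ z : ℂ × ℂ, ‖z.1‖ ≤ 1 → ‖z.2‖ ≤ 1 →
    ¬(‖z.1‖ = 1 ∧ ‖z.2‖ = 1) → pev P z ≠ 0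

/-- Wirtinger derivative ∂/∂z₁ within a set (for boundary points, via the C² extension). -/
def wirt1 (f : ℂ × ℂ → ℂ) (s : Set (ℂ × ℂ)) (z : ℂ × ℂ) : ℂ :=
  (fderivWithin ℝ f s z (1, 0) - Complex.I * fderivWithin ℝ f s z (Complex.I, 0)) / 2

/-- Wirtinger derivative ∂/∂z₂ within a set. -/
def wirt2 (f : ℂ × ℂ → ℂ) (s : Set (ℂ × ℂ)) (z : ℂ × ℂ) : ℂ :=
  (fderivWithin ℝ f s z (0, 1) - Complex.I * fderivWithin ℝ f s z (0, Complex.I)) / 2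


open Metric Filter Topology ComplexConjugate

theorem Convex.norm_image_sub_le_mul_sq_of_norm_hasDerivWithin_le {𝕜 G : Type*} [RCLike 𝕜]
    [NormedAddCommGroup G] [NormedSpace 𝕜 G] {f f' : 𝕜 → G} {s : Set 𝕜} {x₀ x : 𝕜} {M : ℝ}
    (hs : Convex ℝ s) (hf : ∀ y ∈ s, HasDerivWithinAt f (f' y) s y) (hM : 0 ≤ M)
    (hf' : ∀ y ∈ s, ‖f' y‖ ≤ M * ‖y - x₀‖) (hx₀ : x₀ ∈ s) (hx : x ∈ s) :
    ‖f x - f x₀‖ ≤ M * ‖x - x₀‖ ^ 2 := by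
  have hseg : segment ℝ x₀ x ⊆ s := hs.segment_subset hx₀ hx
  calc ‖f x - f x₀‖ ≤ M * ‖x - x₀‖ * ‖x - x₀‖ :=
        (convex_segment x₀ x).norm_image_sub_le_of_norm_hasDerivWithin_le
          (fun y hy => (hf y (hseg hy)).mono hseg)
          (fun y hy => (hf' y (hseg hy)).trans
            (mul_le_mul_of_nonneg_left (norm_sub_le_of_mem_segment hy) hM))
          (left_mem_segment ℝ x₀ x) (right_mem_segment ℝ x₀ x)
    _ = M * ‖x - x₀‖ ^ 2 := by ring

theorem fderivWithin_closure_map_I_smul {E F : Type*} [NormedAddCommGroup E] [NormedSpace ℂ E]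
    [NormedAddCommGroup F] [NormedSpace ℂ F] {f : E → F} {U : Set E} (hU : IsOpen U)
    (hf : DifferentiableOn ℂ f U) (hf' : ContinuousOn (fderivWithin ℝ f (closure U)) (closure U))
    (v : E) {z : E} (hz : z ∈ closure U) :
    fderivWithin ℝ f (closure U) z (I • v) = I • fderivWithin ℝ f (closure U) z v := by
  refine EqOn.of_subset_closure (fun y hy => ?_) (hf'.clm_apply continuousOn_const)
    ((hf'.clm_apply continuousOn_const).const_smul I) subset_closure le_rfl hz
  have hUy : U ∈ 𝓝 y := hU.mem_nhds hy
  have hD : fderivWithin ℝ f (closure U) y = (fderiv ℂ f y).restrictScalars ℝ := by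
    rw [fderivWithin_of_mem_nhds (mem_of_superset hUy subset_closure),
      (hf.differentiableAt hUy).fderiv_restrictScalars ℝ]
  simp [hD]

namespace Complex

theorem sq_norm_one_sub_conj_mul_sub_sq_norm_sub (b w : ℂ) :
    ‖1 - conj b * w‖ ^ 2 - ‖w - b‖ ^ 2 = (1 - ‖b‖ ^ 2) * (1 - ‖w‖ ^ 2) := by
  simp only [Complex.sq_norm, normSq_apply, sub_re, sub_im, mul_re, mul_im, conj_re, conj_im,
    one_re, one_im]
  ring

theorem norm_sub_lt_norm_one_sub_conj_mul {b w : ℂ} (hb : ‖b‖ < 1) (hw : ‖w‖ < 1) :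
    ‖w - b‖ < ‖1 - conj b * w‖ := by
  have hpos : 0 < (1 - ‖b‖ ^ 2) * (1 - ‖w‖ ^ 2) :=
    mul_pos (by nlinarith [norm_nonneg b]) (by nlinarith [norm_nonneg w])
  rw [← sq_norm_one_sub_conj_mul_sub_sq_norm_sub] at hpos
  exact lt_of_pow_lt_pow_left₀ 2 (norm_nonneg _) (by linarith)

theorem sq_one_sub_norm_mul_le_one_sub_sq_norm {g : ℂ → ℂ}
    (hg : DifferentiableOn ℂ g (ball 0 1)) (hmaps : MapsTo g (ball 0 1) (ball 0 1)) {z : ℂ}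
    (hz : z ∈ ball (0 : ℂ) 1) :
    (1 - ‖g 0‖) ^ 2 * (1 - ‖z‖ ^ 2) ≤ 1 - ‖g z‖ ^ 2 := by
  set b := g 0
  have hb : ‖b‖ < 1 := mem_ball_zero_iff.1 (hmaps (mem_ball_self one_pos))
  have hlt : ∀ w ∈ ball (0 : ℂ) 1, ‖g w - b‖ < ‖1 - conj b * g w‖ := fun w hw =>
    norm_sub_lt_norm_one_sub_conj_mul hb (mem_ball_zero_iff.1 (hmaps hw))
  have hden : ∀ w ∈ ball (0 : ℂ) 1, 1 - conj b * g w ≠ 0 := fun w hw =>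
    norm_pos_iff.1 ((norm_nonneg _).trans_lt (hlt w hw))
  -- Schwarz's lemma for the Möbius transform of `g` that vanishes at `0`
  have hschwarz : ‖(g z - b) / (1 - conj b * g z)‖ ≤ ‖z‖ := by
    refine norm_le_norm_of_mapsTo_ball (f := fun w => (g w - b) / (1 - conj b * g w))
      ((hg.sub_const b).div ((differentiableOn_const 1).sub (hg.const_mul _)) hden)
      (fun w hw => ?_) (by simp [b]) (mem_ball_zero_iff.1 hz)
    rw [mem_closedBall_zero_iff, norm_div, div_le_one (norm_pos_iff.2 (hden w hw))]
    exact (hlt w hw).le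
  rw [norm_div, div_le_iff₀ (norm_pos_iff.2 (hden z hz))] at hschwarz
  have hgz : ‖g z‖ < 1 := mem_ball_zero_iff.1 (hmaps hz)
  have hz1 : ‖z‖ < 1 := mem_ball_zero_iff.1 hz
  have hden_ge : 1 - ‖b‖ ≤ ‖1 - conj b * g z‖ :=
    calc 1 - ‖b‖ ≤ 1 - ‖conj b * g z‖ := by
          rw [norm_mul, norm_conj]; nlinarith [norm_nonneg b, norm_nonneg (g z)]
      _ ≤ ‖1 - conj b * g z‖ := by simpa using norm_sub_norm_le (1 : ℂ) (conj b * g z)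
  calc (1 - ‖b‖) ^ 2 * (1 - ‖z‖ ^ 2) ≤ ‖1 - conj b * g z‖ ^ 2 * (1 - ‖z‖ ^ 2) := by
        gcongr
        nlinarith [norm_nonneg z]
    _ ≤ ‖1 - conj b * g z‖ ^ 2 - ‖g z - b‖ ^ 2 := by
        nlinarith [norm_nonneg (g z - b), norm_nonneg z, norm_nonneg (1 - conj b * g z)]
    _ = (1 - ‖b‖ ^ 2) * (1 - ‖g z‖ ^ 2) := sq_norm_one_sub_conj_mul_sub_sq_norm_sub b (g z)
    _ ≤ 1 - ‖g z‖ ^ 2 := by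
        have : 0 ≤ 1 - ‖g z‖ ^ 2 := by nlinarith [norm_nonneg (g z)]
        nlinarith [mul_nonneg (sq_nonneg ‖b‖) this]

theorem eqOn_one_of_norm_sub_one_le_sq {g : ℂ → ℂ} {M : ℝ}
    (hg : DiffContOnCl ℂ g (ball 0 1)) (hle : MapsTo g (ball 0 1) (closedBall 0 1))
    (hg1 : g 1 = 1) (hsq : ∀ r ∈ Ico (0 : ℝ) 1, ‖g r - 1‖ ≤ M * (1 - r) ^ 2) :
    EqOn g 1 (closedBall 0 1) := by
  by_cases hmaps : MapsTo g (ball 0 1) (ball 0 1)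
  · exfalso
    have hb : ‖g 0‖ < 1 := mem_ball_zero_iff.1 (hmaps (mem_ball_self one_pos))
    -- Julia's inequality forces `1 - ‖g r‖` to be of order at least `1 - r`
    have hlin : ∀ r ∈ Ioo (0 : ℝ) 1, (1 - ‖g 0‖) ^ 2 ≤ 2 * M * (1 - r) := by
      rintro r ⟨hr0, hr1⟩
      have hjulia := sq_one_sub_norm_mul_le_one_sub_sq_norm hg.differentiableOn hmaps
        (z := r) (by simp [abs_of_pos hr0, hr1])
      rw [norm_real, Real.norm_of_nonneg hr0.le] at hjulia
      have hgr : ‖g r‖ ≤ 1 := mem_closedBall_zero_iff.1 (hle (by simp [abs_of_pos hr0, hr1]))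
      have hdist : 1 - ‖g r‖ ≤ ‖g r - 1‖ := by
        simpa [norm_sub_rev] using norm_sub_norm_le (1 : ℂ) (g r)
      have hsqr := hsq r ⟨hr0.le, hr1⟩
      have : (1 - ‖g 0‖) ^ 2 * (1 - r) ≤ 2 * M * (1 - r) * (1 - r) := by
        nlinarith [norm_nonneg (g r), sq_nonneg (1 - ‖g 0‖)]
      exact le_of_mul_le_mul_right this (by linarith)
    have hlim : Tendsto (fun r : ℝ => 2 * M * (1 - r)) (𝓝[<] 1) (𝓝 0) := by
      have : Tendsto (fun r : ℝ => 2 * M * (1 - r)) (𝓝 1) (𝓝 (2 * M * (1 - 1))) :=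
        (continuous_const.mul (continuous_const.sub continuous_id)).tendsto 1
      simpa using this.mono_left nhdsWithin_le_nhds
    have : (1 - ‖g 0‖) ^ 2 ≤ 0 :=
      ge_of_tendsto hlim (eventually_of_mem (Ioo_mem_nhdsLT zero_lt_one) hlin)
    nlinarith
  · obtain ⟨w₀, hw₀, hgw₀⟩ : ∃ w₀ ∈ ball (0 : ℂ) 1, g w₀ ∉ ball (0 : ℂ) 1 := by
      simpa [MapsTo] using hmaps
    have hmax : IsMaxOn (norm ∘ g) (ball 0 1) w₀ := fun w hw =>
      (mem_closedBall_zero_iff.1 (hle hw)).trans (by simpa using hgw₀)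
    have hconst := eqOn_closure_of_isPreconnected_of_isMaxOn_norm
      (convex_ball (0 : ℂ) 1).isPreconnected isOpen_ball hg hw₀ hmax
    rw [closure_ball 0 one_ne_zero] at hconst
    have hgw₀1 : g w₀ = 1 := by
      simpa [hg1] using (hconst (by simp : (1 : ℂ) ∈ closedBall 0 1)).symm
    intro w hw
    simpa [hgw₀1] using hconst hw

end Complex

theorem bidisk_eq_ball_prod_ball : bidisk = ball (0 : ℂ) 1 ×ˢ ball (0 : ℂ) 1 := by
  ext z
  simp [bidisk]

theorem isOpen_bidisk : IsOpen bidisk := by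
  rw [bidisk_eq_ball_prod_ball]
  exact isOpen_ball.prod isOpen_ball

theorem closure_bidisk : closure bidisk = closedBall (0 : ℂ) 1 ×ˢ closedBall (0 : ℂ) 1 := by
  rw [bidisk_eq_ball_prod_ball, closure_prod_eq, closure_ball _ one_ne_zero]

theorem convex_closure_bidisk : Convex ℝ (closure bidisk) := by
  rw [closure_bidisk]
  exact (convex_closedBall _ _).prod (convex_closedBall _ _)

theorem isCompact_closure_bidisk : IsCompact (closure bidisk) := by
  rw [closure_bidisk]
  exact (isCompact_closedBall _ _).prod (isCompact_closedBall _ _)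

theorem uniqueDiffOn_closure_bidisk : UniqueDiffOn ℝ (closure bidisk) := by
  refine uniqueDiffOn_convex convex_closure_bidisk ⟨0, ?_⟩
  rw [closure_bidisk, interior_prod_eq, interior_closedBall _ one_ne_zero]
  simp

theorem mk_mem_closure_bidisk {a w : ℂ} (ha : ‖a‖ ≤ 1) (hw : ‖w‖ ≤ 1) :
    (a, w) ∈ closure bidisk := by
  rw [closure_bidisk]
  exact ⟨mem_closedBall_zero_iff.2 ha, mem_closedBall_zero_iff.2 hw⟩

theorem wirt2_eq_of_apply_zero_I {f : ℂ × ℂ → ℂ} {s : Set (ℂ × ℂ)} {z : ℂ × ℂ}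
    (h : fderivWithin ℝ f s z (0, I) = I • fderivWithin ℝ f s z (0, 1)) :
    wirt2 f s z = fderivWithin ℝ f s z (0, 1) := by
  rw [wirt2, h, smul_eq_mul, ← mul_assoc, I_mul_I]
  ring

section Slice

variable {F : Type*} [NormedAddCommGroup F] [NormedSpace ℂ F] {ψ : ℂ × ℂ → F}

theorem mapsTo_closure_bidisk_closedBall (hψ : ∀ z ∈ bidisk, ‖ψ z‖ < 1)
    (hψ' : ContinuousOn ψ (closure bidisk)) : MapsTo ψ (closure bidisk) (closedBall 0 1) := by
  have hball : MapsTo ψ bidisk (ball 0 1) := fun z hz => mem_ball_zero_iff.2 (hψ z hz)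
  simpa [closure_ball _ one_ne_zero] using hball.closure_of_continuousOn hψ'

theorem fderivWithin_closure_bidisk_apply_zero_I (hψ : DifferentiableOn ℂ ψ bidisk)
    (hψ' : ContDiffOn ℝ 1 ψ (closure bidisk)) {z : ℂ × ℂ} (hz : z ∈ closure bidisk) :
    fderivWithin ℝ ψ (closure bidisk) z (0, I) =
      I • fderivWithin ℝ ψ (closure bidisk) z (0, 1) := by
  simpa using fderivWithin_closure_map_I_smul isOpen_bidisk hψ
    (hψ'.continuousOn_fderivWithin uniqueDiffOn_closure_bidisk le_rfl) (0, 1) hz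

theorem hasDerivWithinAt_slice (hψ : DifferentiableOn ℂ ψ bidisk)
    (hψ' : ContDiffOn ℝ 1 ψ (closure bidisk)) {a w : ℂ} (ha : ‖a‖ ≤ 1)
    (hw : w ∈ closedBall (0 : ℂ) 1) :
    HasDerivWithinAt (fun w => ψ (a, w)) (fderivWithin ℝ ψ (closure bidisk) (a, w) (0, 1))
      (closedBall 0 1) w := by
  have hmaps : MapsTo (fun w => (a, w)) (closedBall (0 : ℂ) 1) (closure bidisk) :=
    fun w hw => mk_mem_closure_bidisk ha (mem_closedBall_zero_iff.1 hw)
  have hψw := ((hψ'.differentiableOn one_ne_zero) _ (hmaps hw)).hasFDerivWithinAt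
  exact ((hψw.comp w (hasFDerivAt_prodMk_right a w).hasFDerivWithinAt hmaps).complexOfReal
    (fderivWithin_closure_bidisk_apply_zero_I hψ hψ' (hmaps hw))).hasDerivWithinAt

theorem differentiableOn_slice (hψ : DifferentiableOn ℂ ψ bidisk)
    (hψ' : ContDiffOn ℝ 1 ψ (closure bidisk)) {a : ℂ} (ha : ‖a‖ ≤ 1) :
    DifferentiableOn ℂ (fun w => ψ (a, w)) (closedBall 0 1) := fun _ hw =>
  (hasDerivWithinAt_slice hψ hψ' ha hw).differentiableWithinAt

theorem exists_norm_slice_sub_le_mul_sq (hψ : DifferentiableOn ℂ ψ bidisk)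
    (hψ' : ContDiffOn ℝ 2 ψ (closure bidisk)) {a w₀ : ℂ} (ha : ‖a‖ ≤ 1) (hw₀ : ‖w₀‖ ≤ 1)
    (hcrit : fderivWithin ℝ ψ (closure bidisk) (a, w₀) (0, 1) = 0) :
    ∃ K : ℝ, ∀ w ∈ closedBall (0 : ℂ) 1, ‖ψ (a, w) - ψ (a, w₀)‖ ≤ K * ‖w - w₀‖ ^ 2 := by
  set D := fderivWithin ℝ ψ (closure bidisk)
  obtain ⟨K, hK⟩ := (hψ'.fderivWithin uniqueDiffOn_closure_bidisk (by norm_num)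
    ).exists_lipschitzOnWith one_ne_zero convex_closure_bidisk isCompact_closure_bidisk
  have hDK : ∀ w ∈ closedBall (0 : ℂ) 1, ‖D (a, w) (0, 1)‖ ≤ K * ‖w - w₀‖ := fun w hw =>
    calc ‖D (a, w) (0, 1)‖ = ‖(D (a, w) - D (a, w₀)) (0, 1)‖ := by simp [hcrit]
      _ ≤ ‖D (a, w) - D (a, w₀)‖ := by simpa using (D (a, w) - D (a, w₀)).le_opNorm (0, 1)
      _ ≤ K * ‖(a, w) - (a, w₀)‖ := hK.norm_sub_le
          (mk_mem_closure_bidisk ha (mem_closedBall_zero_iff.1 hw)) (mk_mem_closure_bidisk ha hw₀)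
      _ = K * ‖w - w₀‖ := by simp
  exact ⟨K, fun w hw => (convex_closedBall 0 1).norm_image_sub_le_mul_sq_of_norm_hasDerivWithin_le
    (fun _ hv => hasDerivWithinAt_slice hψ (hψ'.of_le (by norm_num)) ha hv) K.coe_nonneg hDK
    (mem_closedBall_zero_iff.2 hw₀) hw⟩

end Slice

/-- Julia–Carathéodory rigidity: if ψ : 𝔻² → 𝔻 is holomorphic, C² up to
the closed bidisc, with ψ(1,1) = 1 and ∂ψ/∂z₂(1,1) = 0, then the boundary slice
z₂ ↦ ψ(1,z₂) is identically 1 on the closed unit disc. -/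
theorem statement16
    (ψ : ℂ × ℂ → ℂ)
    (hψhol : DifferentiableOn ℂ ψ bidisk)
    (hψmap : ∀ z ∈ bidisk, ‖ψ z‖ < 1)
    (hψC2 : ContDiffOn ℝ 2 ψ (closure bidisk))
    (hψ11 : ψ (1, 1) = 1)
    (hψd2 : wirt2 ψ (closure bidisk) (1, 1) = 0) :
    ∀ z2 : ℂ, ‖z2‖ ≤ 1 → ψ (1, z2) = 1 := by
  have hψC1 : ContDiffOn ℝ 1 ψ (closure bidisk) := hψC2.of_le (by norm_num)
  have hcrit : fderivWithin ℝ ψ (closure bidisk) (1, 1) (0, 1) = 0 := by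
    rwa [wirt2_eq_of_apply_zero_I (fderivWithin_closure_bidisk_apply_zero_I hψhol hψC1
      (mk_mem_closure_bidisk (by simp) (by simp)))] at hψd2
  obtain ⟨K, hK⟩ := exists_norm_slice_sub_le_mul_sq hψhol hψC2 (by simp) (by simp) hcrit
  have hsq : ∀ r ∈ Ico (0 : ℝ) 1, ‖ψ (1, r) - 1‖ ≤ K * (1 - r) ^ 2 := by
    rintro r ⟨hr0, hr1⟩
    have h := hK r (by simp [abs_of_nonneg hr0, hr1.le])
    rwa [hψ11, ← ofReal_one, ← ofReal_sub, norm_real, Real.norm_of_nonpos (by linarith),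
      neg_sub] at h
  intro z2 hz2
  refine eqOn_one_of_norm_sub_one_le_sq (g := fun w => ψ (1, w)) ?_ (fun w hw => ?_) hψ11 hsq
    (mem_closedBall_zero_iff.2 hz2)
  · exact (differentiableOn_slice hψhol hψC1 (by simp)).diffContOnCl_ball subset_rfl
  · exact mapsTo_closure_bidisk_closedBall hψmap hψC2.continuousOn
      (mk_mem_closure_bidisk (by simp) (mem_closedBall_zero_iff.1 (ball_subset_closedBall hw)))
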